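/- arXiv:1801.08934 — 3 statements merged into one kernel-verified Lean document; each statement's English description precedes it below -/
import Mathlib

section
/- For every real z with 0 < z < 1, the function g(z) := Σ_{k≥1} z^k(1−z^k)/(k(k+1)) satisfies g(z) = ((z−1)/z^2)·(log(1−z) + (1+z)·log(1+z)). -/
/-!
Partial fractions `1/((k+1)(k+2)) = 1/(k+1) - 1/(k+2)` reduce `h(x) = ∑ x^(k+1)/((k+1)(k+2))` to
the series of `-log(1-x)`, giving `h(x) = 1 + ((1-x)/x) log(1-x)`. Since
`z^(k+1)(1 - z^(k+1)) = z^(k+1) - (z^2)^(k+1)`, the sum in question is `h(z) - h(z^2)`, and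
`log(1-z^2) = log(1-z) + log(1+z)` turns this into the closed form.
-/

open Real

lemma Real.hasSum_pow_add_two_div_add_two {x : ℝ} (hx : |x| < 1) :
    HasSum (fun k : ℕ => x ^ (k + 2) / (k + 2)) (-log (1 - x) - x) := by
  have h := (hasSum_nat_add_iff' 1).mpr (hasSum_pow_div_log_of_abs_lt_one hx)
  norm_num [Finset.sum_range_one] at h
  refine h.congr_fun fun k => ?_
  ring

lemma Real.hasSum_pow_succ_div_succ_mul_succ_succ {x : ℝ} (hx : |x| < 1) (hx0 : x ≠ 0) :
    HasSum (fun k : ℕ => x ^ (k + 1) / ((k + 1) * (k + 2)))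
      (1 + (1 - x) / x * log (1 - x)) := by
  have h := (hasSum_pow_div_log_of_abs_lt_one hx).sub
    ((hasSum_pow_add_two_div_add_two hx).div_const x)
  rw [show 1 + (1 - x) / x * log (1 - x) = -log (1 - x) - (-log (1 - x) - x) / x by
    field_simp; ring]
  refine h.congr_fun fun k => ?_
  field_simp
  ring

/-- For `0 < z < 1`, `g(z) = ∑_{k ≥ 1} z^k(1-z^k)/(k(k+1))
= ((z-1)/z²)(log(1-z) + (1+z)·log(1+z))`. -/
theorem stmt_2 (z : ℝ) (hz : z ∈ Set.Ioo (0 : ℝ) 1) :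
    ∑' k : ℕ, z ^ (k + 1) * (1 - z ^ (k + 1)) / ((k + 1) * (k + 2))
      = (z - 1) / z ^ 2 * (Real.log (1 - z) + (1 + z) * Real.log (1 + z)) := by
  obtain ⟨hz0, hz1⟩ := hz
  have hz_abs : |z| < 1 := by rwa [abs_of_pos hz0]
  have hz2_abs : |z ^ 2| < 1 := by
    rw [abs_pow]
    exact pow_lt_one₀ (abs_nonneg z) hz_abs two_ne_zero
  have hsum := (hasSum_pow_succ_div_succ_mul_succ_succ hz_abs hz0.ne').sub
    (hasSum_pow_succ_div_succ_mul_succ_succ hz2_abs (pow_pos hz0 2).ne')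
  have hlog : log (1 - z ^ 2) = log (1 - z) + log (1 + z) := by
    rw [show (1 : ℝ) - z ^ 2 = (1 - z) * (1 + z) by ring, log_mul (by linarith) (by linarith)]
  rw [(hsum.congr_fun fun k => by ring).tsum_eq, hlog]
  field_simp
  ring
end

section
/- Let θ ∈ (0,1) and define coefficients a_{ik} for k ≥ i ≥ 1 by a_{ii} = θ^{1/2}(1−θ)^{i/2} and a_{ik} = −θ^{3/2}(1−θ)^{k−i/2−1} for k > i. With p_k = θ(1−θ)^{k−1}, for all positive integers k, l: Σ_{i=1}^{min(k,l)} a_{ik}·a_{il} = p_k·1{k=l} − p_k·p_l. -/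
/-!
Squaring the half-integer powers turns each product `a i k * a i l` into a monomial in `θ` and
`1 - θ`. For `k ≤ l` the terms with `i < k` form a geometric series summing to
`θ² (1-θ)^(l-1) (1 - (1-θ)^(k-1))`; the term `i = k` is `θ (1-θ)^k` if `k = l` and
`-θ² (1-θ)^(l-1)` otherwise, and `θ + (1 - θ) = 1` gives `p_k 1{k=l} - p_k p_l`.
The case `l ≤ k` follows by symmetry.
-/

open Finset Real

/-- The upper-triangular Cholesky factor of `diag p - p pᵀ`, the covariance matrix of the
indicator vector of a geometric random variable; only the entries with `i ≤ k` are meaningful. -/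
noncomputable def geomCholesky (θ : ℝ) (i k : ℕ) : ℝ :=
  if i = k then θ ^ ((1 : ℝ) / 2) * (1 - θ) ^ ((i : ℝ) / 2)
  else -(θ ^ ((3 : ℝ) / 2) * (1 - θ) ^ ((k : ℝ) - (i : ℝ) / 2 - 1))

theorem mul_sum_Icc_one_sub_pow {R : Type*} [CommRing R] (θ : R) (n : ℕ) :
    θ * ∑ i ∈ Icc 1 n, (1 - θ) ^ (n - i) = 1 - (1 - θ) ^ n := by
  rw [← Ico_add_one_right_eq_Icc, sum_Ico_reflect (fun j => (1 - θ) ^ j) 1 le_rfl,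
    Nat.sub_self, Nat.add_sub_cancel, Nat.Ico_zero_eq_range]
  simpa only [sub_sub_cancel] using mul_neg_geom_sum (1 - θ) n

theorem half_le_sub_half_sub_one {i k : ℕ} (hik : i < k) : (i : ℝ) / 2 ≤ k - i / 2 - 1 := by
  have : (i : ℝ) + 1 ≤ k := by exact_mod_cast hik
  linarith

section geomCholesky

variable {θ : ℝ}

theorem geomCholesky_diag_mul_self (h0 : 0 ≤ θ) (h1 : θ ≤ 1) (i : ℕ) :
    geomCholesky θ i i * geomCholesky θ i i = θ * (1 - θ) ^ i := by
  have hi : (0 : ℝ) ≤ i / 2 := by positivity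
  rw [geomCholesky, if_pos rfl, mul_mul_mul_comm,
    ← rpow_add_of_nonneg h0 (by norm_num) (by norm_num),
    ← rpow_add_of_nonneg (by linarith) hi hi,
    add_halves, add_halves, rpow_one, rpow_natCast]

theorem geomCholesky_diag_mul_off (h0 : 0 ≤ θ) (h1 : θ ≤ 1) {i l : ℕ} (hil : i < l) :
    geomCholesky θ i i * geomCholesky θ i l = -(θ ^ 2 * (1 - θ) ^ (l - 1)) := by
  have hi : (0 : ℝ) ≤ i / 2 := by positivity
  have hexp : (i : ℝ) / 2 + (l - i / 2 - 1) = ((l - 1 : ℕ) : ℝ) := by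
    push_cast [Nat.cast_sub (Nat.one_le_of_lt hil)]; ring
  rw [geomCholesky, geomCholesky, if_pos rfl, if_neg hil.ne, mul_neg, mul_mul_mul_comm,
    ← rpow_add_of_nonneg h0 (by norm_num) (by norm_num),
    ← rpow_add_of_nonneg (by linarith) hi (hi.trans (half_le_sub_half_sub_one hil)), hexp,
    show (1 : ℝ) / 2 + 3 / 2 = (2 : ℕ) by norm_num, rpow_natCast, rpow_natCast]

theorem geomCholesky_off_mul_off (h0 : 0 ≤ θ) (h1 : θ ≤ 1) {i k l : ℕ} (hik : i < k)
    (hil : i < l) :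
    geomCholesky θ i k * geomCholesky θ i l
      = θ ^ 3 * ((1 - θ) ^ (k - 1 - i) * (1 - θ) ^ (l - 1)) := by
  have hi : (0 : ℝ) ≤ i / 2 := by positivity
  have hexp : ((k : ℝ) - i / 2 - 1) + (l - i / 2 - 1) = ((k - 1 - i + (l - 1) : ℕ) : ℝ) := by
    push_cast [Nat.cast_sub (Nat.one_le_of_lt hil), Nat.cast_sub (Nat.le_sub_one_of_lt hik),
      Nat.cast_sub (Nat.one_le_of_lt hik)]; ring
  rw [geomCholesky, geomCholesky, if_neg hik.ne, if_neg hil.ne, neg_mul_neg, mul_mul_mul_comm,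
    ← rpow_add_of_nonneg h0 (by norm_num) (by norm_num),
    ← rpow_add_of_nonneg (by linarith) (hi.trans (half_le_sub_half_sub_one hik))
      (hi.trans (half_le_sub_half_sub_one hil)), hexp,
    show (3 : ℝ) / 2 + 3 / 2 = (3 : ℕ) by norm_num, rpow_natCast, rpow_natCast, pow_add]

theorem sum_geomCholesky_mul_of_le (h0 : 0 ≤ θ) (h1 : θ ≤ 1) {k l : ℕ} (hk : 1 ≤ k)
    (hkl : k ≤ l) :
    ∑ i ∈ Icc 1 k, geomCholesky θ i k * geomCholesky θ i l
      = (if k = l then θ * (1 - θ) ^ (k - 1) else 0)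
        - θ * (1 - θ) ^ (k - 1) * (θ * (1 - θ) ^ (l - 1)) := by
  obtain ⟨n, rfl⟩ : ∃ n, k = n + 1 := ⟨k - 1, by omega⟩
  have hoff : ∑ i ∈ Icc 1 n, geomCholesky θ i (n + 1) * geomCholesky θ i l
      = θ ^ 2 * (1 - θ) ^ (l - 1) * (1 - (1 - θ) ^ n) := by
    rw [← mul_sum_Icc_one_sub_pow, mul_sum, mul_sum]
    refine sum_congr rfl fun i hi => ?_
    have hin : i ≤ n := (mem_Icc.1 hi).2
    rw [geomCholesky_off_mul_off h0 h1 (by omega) (by omega), Nat.add_sub_cancel]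
    ring
  rw [sum_Icc_succ_top (by omega), hoff, Nat.add_sub_cancel]
  rcases hkl.eq_or_lt with rfl | hlt
  · rw [geomCholesky_diag_mul_self h0 h1, if_pos rfl, Nat.add_sub_cancel]
    ring
  · rw [geomCholesky_diag_mul_off h0 h1 hlt, if_neg hlt.ne]
    ring

end geomCholesky

/-- With `a_{ii} = θ^{1/2}(1-θ)^{i/2}`, `a_{ik} = −θ^{3/2}(1-θ)^{k−i/2−1}` for `k > i`,
and `p_k = θ(1-θ)^{k-1}`, one has
`∑_{i=1}^{min(k,l)} a_{ik} a_{il} = p_k·1{k=l} − p_k p_l`. -/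
theorem stmt_10 (θ : ℝ) (hθ : θ ∈ Set.Ioo (0 : ℝ) 1)
    (a : ℕ → ℕ → ℝ)
    (ha_diag : ∀ i : ℕ, 1 ≤ i → a i i = θ ^ ((1 : ℝ) / 2) * (1 - θ) ^ ((i : ℝ) / 2))
    (ha_off : ∀ i k : ℕ, 1 ≤ i → i < k →
      a i k = -(θ ^ ((3 : ℝ) / 2) * (1 - θ) ^ ((k : ℝ) - (i : ℝ) / 2 - 1)))
    (k l : ℕ) (hk : 1 ≤ k) (hl : 1 ≤ l) :
    ∑ i ∈ Finset.Icc 1 (min k l), a i k * a i l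
      = (if k = l then θ * (1 - θ) ^ (k - 1) else 0)
        - θ * (1 - θ) ^ (k - 1) * (θ * (1 - θ) ^ (l - 1)) := by
  have h0 : 0 ≤ θ := hθ.1.le
  have h1 : θ ≤ 1 := hθ.2.le
  have ha : ∀ i k, 1 ≤ i → i ≤ k → a i k = geomCholesky θ i k := by
    intro i k hi hik
    rcases hik.eq_or_lt with rfl | hlt
    · rw [ha_diag i hi, geomCholesky, if_pos rfl]
    · rw [ha_off i k hi hlt, geomCholesky, if_neg hlt.ne]
  have hsum : ∑ i ∈ Icc 1 (min k l), a i k * a i l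
      = ∑ i ∈ Icc 1 (min k l), geomCholesky θ i k * geomCholesky θ i l :=
    sum_congr rfl fun i hi => by
      obtain ⟨hi1, hik, hil⟩ : 1 ≤ i ∧ i ≤ k ∧ i ≤ l := by
        simpa only [mem_Icc, le_min_iff] using hi
      rw [ha i k hi1 hik, ha i l hi1 hil]
  rw [hsum]
  rcases le_total k l with hkl | hlk
  · rw [min_eq_left hkl, sum_geomCholesky_mul_of_le h0 h1 hk hkl]
  · simp_rw [min_eq_right hlk, mul_comm (geomCholesky θ _ k)]
    rw [sum_geomCholesky_mul_of_le h0 h1 hl hlk]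
    rcases eq_or_ne l k with rfl | hne
    · ring
    · rw [if_neg hne, if_neg hne.symm]; ring
end

section
/- Let θ ∈ (0,1), p_k = θ(1−θ)^{k−1}, and define for 0 ≤ s, t ≤ 1 the function K(t,s) = Σ_{k≥1} min(t/k, s/k) p_k − Σ_{k,l≥1} min(t/k, s/l) p_k p_l. Then K(t,t) = g(1−θ)·t for all t ∈ [0,1], where g(z) = Σ_{k≥1} z^k(1−z^k)/(k(k+1)). -/
/-!
Since `1 / (m + 1) = ∑_{j ≥ m} 1 / ((j + 1) (j + 2))`, exchanging sums turns
`∑ₐ w a / (m a + 1)` into `∑_j W(j) / ((j + 1) (j + 2))`, where `W(j)` is the weight of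
`{a | m a ≤ j}`. For the geometric weights `θ (1 - θ)^k` this cumulative weight is
`1 - z^(j+1)` with `z = 1 - θ`, and for the product weights with `m = max` it is its square.
As `min (t/(k+1)) (t/(l+1)) = t / (max k l + 1)`, the variance is
`t ∑_j ((1 - z^(j+1)) - (1 - z^(j+1))^2) / ((j + 1) (j + 2)) = g(z) t`.
-/

open Finset Filter Topology

theorem hasSum_sub_succ_of_antitone {f : ℕ → ℝ} (hf : Antitone f)
    (hlim : Tendsto f atTop (𝓝 0)) : HasSum (fun n ↦ f n - f (n + 1)) (f 0) := by
  rw [hasSum_iff_tendsto_nat_of_nonneg fun n ↦ sub_nonneg.2 (hf n.le_succ)]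
  simp_rw [sum_range_sub']
  simpa using hlim.const_sub (f 0)

theorem hasSum_ite_le_div_succ_mul_succ (m : ℕ) (x : ℝ) :
    HasSum (fun j : ℕ ↦ (if m ≤ j then x else 0) / ((j + 1) * (j + 2))) (x / (m + 1)) := by
  have hlim : Tendsto (fun i : ℕ ↦ 1 / ((i + m : ℕ) + 1 : ℝ)) atTop (𝓝 0) :=
    tendsto_one_div_add_atTop_nhds_zero_nat.comp (tendsto_add_atTop_nat m)
  have htele := (hasSum_sub_succ_of_antitone (fun _ _ h ↦ by gcongr) hlim).mul_left x
  refine (hasSum_nat_add_iff' m).1 ?_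
  rw [sum_eq_zero fun j hj ↦ by simp [(mem_range.1 hj).not_ge], sub_zero,
    show x / (m + 1) = x * (1 / ((0 + m : ℕ) + 1 : ℝ)) by simp [div_eq_mul_inv]]
  refine htele.congr_fun fun i ↦ ?_
  rw [if_pos (Nat.le_add_left m i)]
  push_cast
  field_simp
  ring

theorem hasSum_cumulative_div_succ_mul_succ {α : Type*} {w : α → ℝ} (hw0 : ∀ a, 0 ≤ w a)
    (hw : Summable w) (m : α → ℕ) :
    HasSum (fun j : ℕ ↦ (∑' a, if m a ≤ j then w a else 0) / ((j + 1) * (j + 2)))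
      (∑' a, w a / (m a + 1)) := by
  set F : α × ℕ → ℝ := fun p ↦ (if m p.1 ≤ p.2 then w p.1 else 0) / ((p.2 + 1) * (p.2 + 2))
  have hF0 : 0 ≤ F := fun p ↦
    div_nonneg (by split_ifs; exacts [hw0 _, le_rfl]) (by positivity)
  have hrow (a : α) : HasSum (fun j ↦ F (a, j)) (w a / (m a + 1)) :=
    hasSum_ite_le_div_succ_mul_succ (m a) (w a)
  have hcol (j : ℕ) : HasSum (fun a ↦ F (a, j))
      ((∑' a, if m a ≤ j then w a else 0) / ((j + 1) * (j + 2))) := by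
    refine (Summable.hasSum ?_).div_const _
    refine hw.of_nonneg_of_le (fun a ↦ ?_) (fun a ↦ ?_) <;> split_ifs <;> simp [hw0 a]
  have hF : Summable F := by
    refine (summable_prod_of_nonneg hF0).2 ⟨fun a ↦ (hrow a).summable, ?_⟩
    refine hw.of_nonneg_of_le (fun a ↦ tsum_nonneg fun j ↦ hF0 _) fun a ↦ ?_
    rw [(hrow a).tsum_eq]
    exact div_le_self (hw0 a) (by simp)
  have hsum := hF.hasSum
  rw [(hsum.prod_fiberwise hrow).tsum_eq]
  exact ((Equiv.prodComm ℕ α).hasSum_iff.2 hsum).prod_fiberwise hcol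

theorem tsum_ite_le_eq_sum_range {M : Type*} [AddCommMonoid M] [TopologicalSpace M]
    (f : ℕ → M) (j : ℕ) : ∑' k, (if k ≤ j then f k else 0) = ∑ k ∈ range (j + 1), f k := by
  rw [tsum_eq_sum (s := range (j + 1)) fun k hk ↦ if_neg (by simpa [Nat.lt_succ_iff] using hk)]
  exact sum_congr rfl fun k hk ↦ if_pos (Nat.lt_succ_iff.1 (mem_range.1 hk))

theorem tsum_ite_max_le_eq_mul {R : Type*} [NonUnitalNonAssocSemiring R] [TopologicalSpace R]
    (f g : ℕ → R) (j : ℕ) :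
    ∑' p : ℕ × ℕ, (if max p.1 p.2 ≤ j then f p.1 * g p.2 else 0)
      = (∑ k ∈ range (j + 1), f k) * ∑ l ∈ range (j + 1), g l := by
  rw [tsum_eq_sum (s := range (j + 1) ×ˢ range (j + 1)) fun p hp ↦ if_neg ?_, sum_mul_sum,
    ← sum_product']
  · refine sum_congr rfl fun p hp ↦ if_pos ?_
    simp only [mem_product, mem_range, Nat.lt_succ_iff] at hp
    exact max_le hp.1 hp.2
  · simpa [Nat.lt_succ_iff] using hp

theorem sum_range_mul_one_sub_pow {R : Type*} [Ring R] (θ : R) (n : ℕ) :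
    ∑ k ∈ range n, θ * (1 - θ) ^ k = 1 - (1 - θ) ^ n := by
  rw [← mul_sum, ← mul_neg_geom_sum, sub_sub_cancel]

theorem min_div_add_one_eq_div_max {t : ℝ} (ht : 0 ≤ t) (k l : ℕ) :
    min (t / (k + 1)) (t / (l + 1)) = t / ((max k l : ℕ) + 1) := by
  rcases le_total k l with h | h
  · rw [max_eq_right h, min_eq_right (by gcongr)]
  · rw [max_eq_left h, min_eq_left (by gcongr)]

/-- With `p_k = θ(1-θ)^{k-1}` and
`K(t,s) = ∑_{k ≥ 1} min(t/k, s/k) p_k − ∑_{k,l ≥ 1} min(t/k, s/l) p_k p_l`,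
one has `K(t,t) = g(1-θ)·t` where `g(z) = ∑_{k ≥ 1} z^k(1-z^k)/(k(k+1))`. -/
theorem stmt_18 (θ : ℝ) (hθ : θ ∈ Set.Ioo (0 : ℝ) 1) (t : ℝ) (ht : t ∈ Set.Icc (0 : ℝ) 1) :
    (∑' k : ℕ, min (t / (k + 1)) (t / (k + 1)) * (θ * (1 - θ) ^ k))
      - ∑' kl : ℕ × ℕ, min (t / (kl.1 + 1)) (t / (kl.2 + 1))
          * (θ * (1 - θ) ^ kl.1) * (θ * (1 - θ) ^ kl.2)
      = (∑' k : ℕ, (1 - θ) ^ (k + 1) * (1 - (1 - θ) ^ (k + 1)) / ((k + 1) * (k + 2))) * t := by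
  obtain ⟨hθ0, hθ1⟩ := hθ
  have hp0 (k : ℕ) : 0 ≤ θ * (1 - θ) ^ k := mul_nonneg hθ0.le (pow_nonneg (by linarith) k)
  have hp : Summable fun k : ℕ ↦ θ * (1 - θ) ^ k :=
    (summable_geometric_of_lt_one (by linarith) (by linarith)).mul_left θ
  have hA := hasSum_cumulative_div_succ_mul_succ hp0 hp fun k ↦ k
  have hB := hasSum_cumulative_div_succ_mul_succ
    (fun kl : ℕ × ℕ ↦ mul_nonneg (hp0 kl.1) (hp0 kl.2)) (hp.mul_of_nonneg hp hp0 hp0)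
    fun kl ↦ max kl.1 kl.2
  simp only [tsum_ite_le_eq_sum_range, sum_range_mul_one_sub_pow] at hA
  simp only [tsum_ite_max_le_eq_mul (fun k ↦ θ * (1 - θ) ^ k) (fun k ↦ θ * (1 - θ) ^ k),
    sum_range_mul_one_sub_pow] at hB
  have hdiag : ∑' k : ℕ, min (t / (k + 1)) (t / (k + 1)) * (θ * (1 - θ) ^ k)
      = t * ∑' k : ℕ, θ * (1 - θ) ^ k / (k + 1) := by
    rw [← tsum_mul_left]
    congr with k
    rw [min_self]
    ring
  have hoff : ∑' kl : ℕ × ℕ, min (t / (kl.1 + 1)) (t / (kl.2 + 1))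
        * (θ * (1 - θ) ^ kl.1) * (θ * (1 - θ) ^ kl.2)
      = t * ∑' kl : ℕ × ℕ,
          θ * (1 - θ) ^ kl.1 * (θ * (1 - θ) ^ kl.2) / ((max kl.1 kl.2 : ℕ) + 1) := by
    rw [← tsum_mul_left]
    congr with kl
    rw [min_div_add_one_eq_div_max ht.1]
    ring
  rw [hdiag, hoff, ← mul_sub, mul_comm, ← (hA.sub hB).tsum_eq]
  congr with j
  ring
end
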